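/- arXiv:1603.04337 — 5 statements merged into one kernel-verified Lean document; each statement's English description precedes it below -/
import Mathlib

section
/- If the power graph of a group G has finite independence number, then G is locally finite (every finitely generated subgroup is finite). -/
/-- The power graph of a group: distinct `x, y` are adjacent iff one is a power of the other. -/
def powerGraph (G : Type*) [Group G] : SimpleGraph G where
  Adj x y := x ≠ y ∧ ∃ n : ℕ, y = x ^ n ∨ x = y ^ n
  symm := by constructor; rintro x y ⟨h, n, hn⟩; exact ⟨h.symm, n, hn.symm⟩
  loopless := by constructor; rintro x ⟨h, _⟩; exact h rfl

/-- A set of vertices is independent if no two of its elements are adjacent. -/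
def IsIndepSet {V : Type*} (G' : SimpleGraph V) (s : Set V) : Prop :=
  s.Pairwise fun x y => ¬ G'.Adj x y

/-!
An element `x` of infinite order would give the infinite independent set `{x ^ p | p prime}`, so
`G` is periodic. Adjacent elements generate comparable cyclic subgroups, so generators of an
antichain of cyclic subgroups form an independent set: the poset of cyclic subgroups has width at
most `N`. By Dilworth's theorem (Perles' proof for finite posets, then compactness), `G` is the
union of `N` sets on each of which the cyclic subgroups form a chain; each of them generates a
locally cyclic, hence locally finite, subgroup. A finitely generated subgroup `H` is covered by
their intersections with `H`, so by B. H. Neumann's lemma one of them has finite index in `H`.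
That one is finitely generated, hence lies in a single finite cyclic subgroup, and so `H` is
finite.
-/

open Finset

section Order

variable {α : Type*}

/-- Colours are natural numbers below `n` rather than elements of `Fin n`, so that the empty set
has a colouring even when `n = 0`. -/
def IsChainColoring (r : α → α → Prop) (s : Set α) (n : ℕ) (c : α → ℕ) : Prop :=
  (∀ x ∈ s, c x < n) ∧ ∀ i, IsChain r {x ∈ s | c x = i}

namespace IsChainColoring

variable {r : α → α → Prop} {s t : Set α} {n : ℕ} {c : α → ℕ}

theorem mono (h : IsChainColoring r s n c) (hts : t ⊆ s) : IsChainColoring r t n c :=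
  ⟨fun x hx => h.1 x (hts hx), fun i => (h.2 i).mono fun _ hx => by exact ⟨hts hx.1, hx.2⟩⟩

theorem exists_union (h : IsChainColoring r s n c) {K : Set α} (hK : IsChain r K) :
    ∃ c', IsChainColoring r (K ∪ s) (n + 1) c' := by
  classical
  refine ⟨K.piecewise (fun _ => n) c, fun x hx => ?_, fun i x hx y hy hxy => ?_⟩
  · by_cases hxK : x ∈ K
    · simp [hxK]
    · simpa [hxK] using (h.1 x (hx.resolve_left hxK)).trans (Nat.lt_succ_self n)
  · obtain ⟨hxs, rfl⟩ := hx
    obtain ⟨hys, hyx⟩ := hy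
    by_cases hxK : x ∈ K <;> by_cases hyK : y ∈ K <;>
      simp only [Set.piecewise_eq_of_mem, Set.piecewise_eq_of_notMem, hxK, hyK,
        not_false_eq_true] at hyx
    · exact hK hxK hyK hxy
    · exact absurd hyx (h.1 y (hys.resolve_left hyK)).ne
    · exact absurd hyx.symm (h.1 x (hxs.resolve_left hxK)).ne
    · exact h.2 _ ⟨hxs.resolve_left hxK, rfl⟩ ⟨hys.resolve_left hyK, hyx⟩ hxy

end IsChainColoring

section PartialOrder

variable [PartialOrder α]

theorem Finset.exists_isGreatest_of_isChain {t : Finset α} (ht : IsChain (· ≤ ·) (t : Set α))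
    (hne : t.Nonempty) : ∃ m, IsGreatest (t : Set α) m := by
  obtain ⟨m, hm⟩ := t.exists_maximal hne
  refine ⟨m, hm.prop, fun x hx => ?_⟩
  obtain rfl | hxm := eq_or_ne x m
  · exact le_rfl
  · exact (ht hx hm.prop hxm).elim id (hm.le_of_ge hx)

theorem Finset.exists_le_of_maximal_of_card_antichain_le {s : Finset α} {a : α} {n : ℕ}
    (ha : Maximal (· ∈ s) a) (hwidth : ∀ t ⊆ s, IsAntichain (· ≤ ·) (t : Set α) → #t ≤ n)
    {m : Fin n → α} (hms : ∀ i, m i ∈ s) (hma : ∀ i, m i ≠ a) (hm : ∀ i j, m i ≤ m j → i = j) :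
    ∃ i, m i ≤ a := by
  classical
  by_contra! hcomp
  let A : Finset α := insert a (Finset.univ.image m)
  have hanti : IsAntichain (· ≤ ·) (A : Set α) := by
    rw [coe_insert, coe_image, coe_univ, Set.image_univ]
    refine IsAntichain.insert (fun _ hx _ hy hne hxy => ?_) ?_ ?_
    · obtain ⟨i, rfl⟩ := hx
      obtain ⟨j, rfl⟩ := hy
      exact hne (congrArg m (hm i j hxy))
    · rintro _ ⟨i, rfl⟩ -
      exact hcomp i
    · rintro _ ⟨i, rfl⟩ - hai
      exact hcomp i (ha.le_of_ge (hms i) hai)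
  have hcard := hwidth A (insert_subset ha.prop fun x hx => by
    obtain ⟨i, -, rfl⟩ := mem_image.1 hx
    exact hms i) hanti
  rw [card_insert_of_notMem fun hx => by
      obtain ⟨i, -, hi⟩ := mem_image.1 hx
      exact hma i hi,
    card_image_of_injective _ fun i j hij => hm i j hij.le, card_univ, Fintype.card_fin] at hcard
  omega

namespace IsChainColoring

variable {s t : Finset α} {n : ℕ} {c : α → ℕ}

theorem exists_mem_of_isAntichain (h : IsChainColoring (· ≤ ·) (s : Set α) n c) (hts : t ⊆ s)
    (ht : IsAntichain (· ≤ ·) (t : Set α)) (hcard : #t = n) {i : ℕ} (hi : i < n) :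
    ∃ b ∈ t, c b = i := by
  classical
  have hinj : Set.InjOn c t := fun x hx y hy hxy => by
    by_contra hne
    exact (h.2 _ ⟨hts hx, rfl⟩ ⟨hts hy, hxy.symm⟩ hne).elim (ht hx hy hne) (ht hy hx (Ne.symm hne))
  have himage : t.image c = range n :=
    eq_of_subset_of_card_le (fun j hj => by
        obtain ⟨x, hx, rfl⟩ := mem_image.1 hj
        exact mem_range.2 (h.1 x (hts hx)))
      (by rw [card_image_of_injOn hinj, card_range, hcard])
  exact mem_image.1 (himage.symm ▸ mem_range.2 hi)

theorem exists_greatest_of_color_in_antichains (h : IsChainColoring (· ≤ ·) (s : Set α) n c)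
    (hbig : ∃ t ⊆ s, IsAntichain (· ≤ ·) (t : Set α) ∧ #t = n) :
    ∃ m : Fin n → α, ∀ i : Fin n,
      (c (m i) = i ∧ ∃ t ⊆ s, IsAntichain (· ≤ ·) (t : Set α) ∧ #t = n ∧ m i ∈ t) ∧
      ∀ t ⊆ s, IsAntichain (· ≤ ·) (t : Set α) → #t = n → ∃ b ∈ t, c b = i ∧ b ≤ m i := by
  classical
  let A : ℕ → Finset α := fun i =>
    s.filter fun x => c x = i ∧ ∃ t ⊆ s, IsAntichain (· ≤ ·) (t : Set α) ∧ #t = n ∧ x ∈ t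
  have hA : ∀ i : Fin n, ∃ m, IsGreatest (A i : Set α) m := by
    intro i
    refine exists_isGreatest_of_isChain ((h.2 i).mono fun x hx => ?_) ?_
    · simp only [A, coe_filter, Set.mem_ofPred_eq] at hx
      exact ⟨hx.1, hx.2.1⟩
    · obtain ⟨t, hts, ht, hcard⟩ := hbig
      obtain ⟨b, hb, hbi⟩ := h.exists_mem_of_isAntichain hts ht hcard i.isLt
      exact ⟨b, mem_filter.2 ⟨hts hb, hbi, t, hts, ht, hcard, hb⟩⟩
  choose m hm using hA
  refine ⟨m, fun i => ⟨(mem_filter.1 (hm i).1).2, fun t hts ht hcard => ?_⟩⟩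
  obtain ⟨b, hb, hbi⟩ := h.exists_mem_of_isAntichain hts ht hcard i.isLt
  exact ⟨b, hb, hbi, (hm i).2 (mem_filter.2 ⟨hts hb, hbi, t, hts, ht, hcard, hb⟩)⟩

theorem exists_isChain_meeting_antichains [DecidableEq α] {a : α} (ha : Maximal (· ∈ s) a)
    (hwidth : ∀ t ⊆ s, IsAntichain (· ≤ ·) (t : Set α) → #t ≤ n)
    (h : IsChainColoring (· ≤ ·) (s.erase a : Set α) n c)
    (hbig : ∃ t ⊆ s.erase a, IsAntichain (· ≤ ·) (t : Set α) ∧ #t = n) :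
    ∃ K ⊆ s, a ∈ K ∧ IsChain (· ≤ ·) (K : Set α) ∧
      ∀ t ⊆ s.erase a, IsAntichain (· ≤ ·) (t : Set α) → #t = n → ∃ b ∈ t, b ∈ K := by
  classical
  obtain ⟨m, hm⟩ := h.exists_greatest_of_color_in_antichains hbig
  have hms : ∀ i, m i ∈ s.erase a := fun i => by
    obtain ⟨⟨-, t, hts, -, -, hit⟩, -⟩ := hm i
    exact hts hit
  have hle : ∀ i j, m i ≤ m j → i = j := fun i j hij => by
    obtain ⟨-, t, hts, ht, hcard, hjt⟩ := (hm j).1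
    obtain ⟨b, hb, hbi, hbm⟩ := (hm i).2 t hts ht hcard
    obtain rfl : b = m j := by_contra fun hne => ht hb hjt hne (hbm.trans hij)
    exact Fin.ext (hbi.symm.trans (hm j).1.1)
  obtain ⟨i, hia⟩ := s.exists_le_of_maximal_of_card_antichain_le ha hwidth
    (fun i => mem_of_mem_erase (hms i)) (fun i => ne_of_mem_erase (hms i)) hle
  let D := (s.erase a).filter fun x => c x = i ∧ x ≤ m i
  refine ⟨insert a D, insert_subset ha.prop ((filter_subset _ _).trans (erase_subset _ _)),
    mem_insert_self _ _, ?_, fun t hts ht hcard => ?_⟩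
  · rw [coe_insert]
    refine IsChain.insert ((h.2 i).mono fun x hx => ?_) fun b hb _ => ?_
    · exact ⟨(mem_filter.1 hx).1, (mem_filter.1 hx).2.1⟩
    · exact Or.inr ((mem_filter.1 hb).2.2.trans hia)
  · obtain ⟨b, hb, hbi, hbm⟩ := (hm i).2 t hts ht hcard
    exact ⟨b, hb, mem_insert_of_mem (mem_filter.2 ⟨hts hb, hbi, hbm⟩)⟩

theorem exists_isChain_card_antichain_sdiff_le [DecidableEq α] {a : α} {k : ℕ}
    (ha : Maximal (· ∈ s) a) (hwidth : ∀ t ⊆ s, IsAntichain (· ≤ ·) (t : Set α) → #t ≤ k + 1)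
    (h : IsChainColoring (· ≤ ·) (s.erase a : Set α) (k + 1) c) :
    ∃ K ⊆ s, a ∈ K ∧ IsChain (· ≤ ·) (K : Set α) ∧
      ∀ t ⊆ s \ K, IsAntichain (· ≤ ·) (t : Set α) → #t ≤ k := by
  by_cases hbig : ∃ t ⊆ s.erase a, IsAntichain (· ≤ ·) (t : Set α) ∧ #t = k + 1
  · obtain ⟨K, hKs, haK, hK, hmeet⟩ := h.exists_isChain_meeting_antichains ha hwidth hbig
    refine ⟨K, hKs, haK, hK, fun t hts ht => ?_⟩
    have htK : ∀ x ∈ t, x ∉ K := fun x hx => (mem_sdiff.1 (hts hx)).2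
    have hta : t ⊆ s.erase a := fun x hx =>
      mem_erase.2 ⟨fun hxa => htK x hx (hxa ▸ haK), (mem_sdiff.1 (hts hx)).1⟩
    have := hwidth t (hts.trans sdiff_subset) ht
    by_contra hlt
    obtain ⟨b, hb, hbK⟩ := hmeet t hta ht (by omega)
    exact htK b hb hbK
  · refine ⟨{a}, singleton_subset_iff.2 ha.prop, mem_singleton_self a,
      by simp [IsChain], fun t hts ht => ?_⟩
    rw [sdiff_singleton_eq_erase] at hts
    have := hwidth t (hts.trans (erase_subset _ _)) ht
    by_contra hlt
    exact hbig ⟨t, hts, ht, by omega⟩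

end IsChainColoring

theorem Finset.exists_isChainColoring_of_card_antichain_le (s : Finset α) (n : ℕ)
    (h : ∀ t ⊆ s, IsAntichain (· ≤ ·) (t : Set α) → #t ≤ n) :
    ∃ c, IsChainColoring (· ≤ ·) (s : Set α) n c := by
  classical
  induction s using Finset.strongInduction generalizing n with
  | H s ih =>
  obtain rfl | hs := s.eq_empty_or_nonempty
  · exact ⟨0, by simp [IsChainColoring]⟩
  obtain ⟨a, ha⟩ := s.exists_maximal hs
  have hn : 1 ≤ n := by simpa using h {a} (singleton_subset_iff.2 ha.prop) (by simp)
  obtain ⟨k, rfl⟩ := Nat.exists_eq_add_of_le' hn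
  obtain ⟨c, hc⟩ := ih _ (erase_ssubset ha.prop) (k + 1) fun t hts =>
    h t (hts.trans (erase_subset _ _))
  obtain ⟨K, hKs, haK, hK, hrest⟩ := hc.exists_isChain_card_antichain_sdiff_le ha h
  obtain ⟨c', hc'⟩ := ih _ (sdiff_ssubset hKs ⟨a, haK⟩) k hrest
  obtain ⟨c'', hc''⟩ := hc'.exists_union hK
  exact ⟨c'', hc''.mono (by simp)⟩

end PartialOrder

open Filter in
theorem exists_isChainColoring_univ_of_forall_finset {r : α → α → Prop} {n : ℕ}
    (h : ∀ T : Finset α, ∃ c, IsChainColoring r (T : Set α) n c) :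
    ∃ c : α → ℕ, IsChainColoring r Set.univ n c := by
  choose c hc using h
  -- `x` gets the colour it receives in `U`-almost every finite colouring.
  let U : Ultrafilter (Finset α) := .of atTop
  have hU : ∀ x, ∀ᶠ T : Finset α in U, x ∈ T := fun x =>
    Ultrafilter.of_le atTop <|
      (eventually_ge_atTop {x}).mono fun _ hT => Finset.singleton_subset_iff.1 hT
  have hcol : ∀ x, ∃ i ∈ Set.Iio n, ∀ᶠ T : Finset α in U, c T x = i := fun x =>
    (Ultrafilter.eventually_exists_mem_iff (Set.finite_Iio n)).1
      ((hU x).mono fun T hT => ⟨c T x, (hc T).1 x hT, rfl⟩)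
  choose d hdn hd using hcol
  refine ⟨d, fun x _ => hdn x, fun i x ⟨_, hx⟩ y ⟨_, hy⟩ hxy => ?_⟩
  obtain ⟨T, hxT, hyT, hTx, hTy⟩ := ((hU x).and ((hU y).and ((hd x).and (hd y)))).exists
  exact (hc T).2 i ⟨hxT, hTx.trans hx⟩ ⟨hyT, hTy.trans hy⟩ hxy

theorem exists_isChainColoring_univ_of_card_antichain_le [PartialOrder α] {n : ℕ}
    (h : ∀ t : Finset α, IsAntichain (· ≤ ·) (t : Set α) → #t ≤ n) :
    ∃ c : α → ℕ, IsChainColoring (· ≤ ·) Set.univ n c :=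
  exists_isChainColoring_univ_of_forall_finset fun T =>
    T.exists_isChainColoring_of_card_antichain_le n fun t _ => h t

end Order

section PowerGraph

variable {G : Type*} [Group G]

open Subgroup

theorem mem_zpowers_or_mem_zpowers_of_powerGraph_adj {x y : G} (h : (powerGraph G).Adj x y) :
    y ∈ zpowers x ∨ x ∈ zpowers y := by
  obtain ⟨-, n, rfl | rfl⟩ := h
  · exact .inl (npow_mem_zpowers x n)
  · exact .inr (npow_mem_zpowers y n)

theorem isIndepSet_image_pow {x : G} (hx : ¬IsOfFinOrder x) {S : Set ℕ}
    (hS : S.Pairwise fun p q => ¬p ∣ q) : IsIndepSet (powerGraph G) ((x ^ ·) '' S) := by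
  have hinj := injective_pow_iff_not_isOfFinOrder.2 hx
  rintro _ ⟨p, hp, rfl⟩ _ ⟨q, hq, rfl⟩ hne ⟨-, k, h | h⟩ <;> rw [← pow_mul] at h
  · exact hS hp hq (ne_of_apply_ne _ hne) ⟨k, hinj h⟩
  · exact hS hq hp (ne_of_apply_ne _ hne).symm ⟨k, hinj h⟩

variable {N : ℕ} (hN : ∀ s : Finset G, IsIndepSet (powerGraph G) ↑s → #s ≤ N)
include hN

theorem isOfFinOrder_of_card_indepSet_le (x : G) : IsOfFinOrder x := by
  classical
  by_contra hx
  obtain ⟨P, hP, hcard⟩ := Nat.infinite_setOfPred_prime.exists_subset_card_eq (N + 1)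
  have hindep : IsIndepSet (powerGraph G) ((x ^ ·) '' P) := isIndepSet_image_pow hx
    fun p hp q hq hpq hdvd => hpq ((Nat.prime_dvd_prime_iff_eq (hP hp) (hP hq)).1 hdvd)
  have := hN (P.image (x ^ ·)) (by rwa [coe_image])
  rw [card_image_of_injective _ (injective_pow_iff_not_isOfFinOrder.2 hx), hcard] at this
  omega

theorem card_le_of_isAntichain_zpowers (t : Finset (Subgroup G))
    (ht : (t : Set (Subgroup G)) ⊆ Set.range zpowers)
    (hanti : IsAntichain (· ≤ ·) (t : Set (Subgroup G))) :
    #t ≤ N := by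
  classical
  let gen := Function.invFun (zpowers : G → Subgroup G)
  have hgen : ∀ A ∈ t, zpowers (gen A) = A := fun A hA => Function.invFun_eq (ht hA)
  have hinj : Set.InjOn gen t := fun A hA B hB hAB => by
    rw [← hgen A hA, ← hgen B hB, hAB]
  have hindep : IsIndepSet (powerGraph G) ↑(t.image gen) := by
    rw [coe_image]
    rintro _ ⟨A, hA, rfl⟩ _ ⟨B, hB, rfl⟩ hne hadj
    have hAB : A ≠ B := ne_of_apply_ne _ hne
    rcases mem_zpowers_or_mem_zpowers_of_powerGraph_adj hadj with h | h
    · exact hanti hB hA hAB.symm (hgen A hA ▸ hgen B hB ▸ zpowers_le.2 h)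
    · exact hanti hA hB hAB (hgen A hA ▸ hgen B hB ▸ zpowers_le.2 h)
  simpa [card_image_of_injOn hinj] using hN _ hindep

theorem exists_isChainColoring_zpowers :
    ∃ c : G → ℕ, IsChainColoring (fun x y => x ∈ zpowers y) Set.univ N c := by
  obtain ⟨c, hcN, hc⟩ := exists_isChainColoring_univ_of_card_antichain_le
      (α := Set.range (zpowers : G → Subgroup G)) (n := N) fun t ht => by
    have := card_le_of_isAntichain_zpowers hN (t.map (Function.Embedding.subtype _))
      (by simp [Set.image_subset_iff]) (by simpa using ht.image Subtype.val fun _ _ h => h)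
    simpa using this
  refine ⟨fun g => c (Set.rangeFactorization zpowers g), fun g _ => hcN _ trivial,
    fun i x ⟨_, hx⟩ y ⟨_, hy⟩ _ => ?_⟩
  by_cases hxy : Set.rangeFactorization zpowers x = Set.rangeFactorization zpowers y
  · exact .inl (zpowers_le.1 (congrArg Subtype.val hxy).le)
  · exact (hc i ⟨trivial, hx⟩ ⟨trivial, hy⟩ hxy).imp zpowers_le.1 zpowers_le.1

end PowerGraph

namespace Subgroup

variable {G : Type*} [Group G]

theorem FG.map {G' : Type*} [Group G'] {K : Subgroup G} (hK : K.FG) (f : G →* G') :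
    (K.map f).FG := by
  classical
  obtain ⟨F, rfl⟩ := hK
  exact ⟨F.image f, by rw [Finset.coe_image, MonoidHom.map_closure]⟩

theorem exists_le_of_fg_le_sSup {S : Set (Subgroup G)} (hne : S.Nonempty)
    (hS : DirectedOn (· ≤ ·) S) {K : Subgroup G} (hK : K.FG) (hle : K ≤ sSup S) :
    ∃ H ∈ S, K ≤ H := by
  obtain ⟨F, rfl⟩ := hK
  have hF : (F : Set G) ⊆ ⋃ H ∈ S, (H : Set G) := fun x hx => by
    obtain ⟨H, hH, hxH⟩ := (mem_sSup_of_directedOn hne hS).1 (hle (subset_closure hx))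
    exact Set.mem_biUnion hH hxH
  obtain ⟨H, hH, hFH⟩ := hS.exists_mem_subset_of_finset_subset_biUnion hne hF
  exact ⟨H, hH, (closure_le H).2 hFH⟩

theorem closure_eq_sSup_zpowers (S : Set G) : closure S = sSup (zpowers '' S) :=
  le_antisymm ((closure_le _).2 fun g hg => zpowers_le.1 (le_sSup (Set.mem_image_of_mem _ hg)))
    (sSup_le <| by rintro _ ⟨g, hg, rfl⟩; exact zpowers_le.2 (subset_closure hg))

theorem exists_le_zpowers_of_fg_le_closure {S : Set G} (hS : IsChain (fun x y => x ∈ zpowers y) S)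
    {K : Subgroup G} (hK : K.FG) (hle : K ≤ closure S) : ∃ g, K ≤ zpowers g := by
  obtain rfl | hne := S.eq_empty_or_nonempty
  · exact ⟨1, by simpa using hle⟩
  have hdir : DirectedOn (· ≤ ·) (zpowers '' S) :=
    (hS.image_of_map_rel _ _ _ fun _ _ h => zpowers_le.2 h).directedOn
  rw [closure_eq_sSup_zpowers] at hle
  obtain ⟨_, ⟨g, -, rfl⟩, hKg⟩ := exists_le_of_fg_le_sSup (hne.image _) hdir hK hle
  exact ⟨g, hKg⟩

theorem finite_of_fg_of_subset_biUnion {ι : Type*} {H : Subgroup G} (hH : H.FG)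
    (K : ι → Subgroup G) (s : Finset ι) (hcover : (H : Set G) ⊆ ⋃ i ∈ s, (K i : Set G))
    (hK : ∀ i ∈ s, ∀ L ≤ K i, L.FG → Finite L) : Finite H := by
  have : Group.FG H := (Group.fg_iff_subgroup_fg H).2 hH
  obtain ⟨i, hi, hfin⟩ := exists_finiteIndex_of_leftCoset_cover
    (H := fun i => (K i).subgroupOf H) (g := 1) (s := s) <| Set.eq_univ_of_forall fun x => by
      obtain ⟨i, hi, hx⟩ := Set.mem_iUnion₂.1 (hcover x.2)
      exact Set.mem_biUnion hi (by simpa [mem_subgroupOf] using hx)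
  let L := (K i).subgroupOf H
  have hLfg : (L.map H.subtype).FG := ((Group.fg_iff_subgroup_fg L).1 inferInstance).map _
  have := hK i hi _ (subgroupOf_map_subtype (K i) H ▸ inf_le_left) hLfg
  have : Finite L := .of_equiv _ (L.equivMapOfInjective _ H.subtype_injective).toEquiv.symm
  exact (finite_iff_finite_and_finiteIndex L).2 ⟨this, hfin⟩

end Subgroup

theorem locally_finite_of_finite_independence_number (G : Type*) [Group G]
    (h : ∃ N : ℕ, ∀ s : Finset G, IsIndepSet (powerGraph G) ↑s → s.card ≤ N) :
    ∀ s : Finset G, Finite (Subgroup.closure (s : Set G)) := by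
  obtain ⟨N, hN⟩ := h
  obtain ⟨c, hcN, hc⟩ := exists_isChainColoring_zpowers hN
  intro s
  refine Subgroup.finite_of_fg_of_subset_biUnion ⟨s, rfl⟩
    (fun i => Subgroup.closure {x ∈ Set.univ | c x = i}) (range N) (fun x _ => ?_)
    fun i _ L hL hLfg => ?_
  · exact Set.mem_biUnion (mem_range.2 (hcN x trivial)) (Subgroup.subset_closure ⟨trivial, rfl⟩)
  · obtain ⟨g, hg⟩ := Subgroup.exists_le_zpowers_of_fg_le_closure (hc i) hLfg hL
    exact ((isOfFinOrder_of_card_indepSet_le hN g).finite_zpowers.subset hg).to_subtype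
end

section
/- If G is an abelian group whose power graph has finite independence number, then either G is finite or G is isomorphic to C_{p^∞} × H for some prime p, where H is a finite group with p not dividing |H|. -/
/-- The Prüfer `p`-group: the `p`-primary component of `ℚ/ℤ`. -/
def pruferGroup (p : ℕ) : AddSubgroup (ℚ ⧸ AddSubgroup.zmultiples (1 : ℚ)) where
  carrier := {x | ∃ n : ℕ, p ^ n • x = 0}
  zero_mem' := ⟨0, smul_zero _⟩
  add_mem' := by
    rintro a b ⟨m, hm⟩ ⟨n, hn⟩
    refine ⟨m + n, ?_⟩
    have ha : p ^ (m + n) • a = 0 := by rw [pow_add, mul_comm, mul_smul, hm, smul_zero]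
    have hb : p ^ (m + n) • b = 0 := by rw [pow_add, mul_smul, hn, smul_zero]
    rw [smul_add, ha, hb, add_zero]
  neg_mem' := by
    rintro a ⟨m, hm⟩
    exact ⟨m, by rw [smul_neg, hm, neg_zero]⟩

/-!
A bound on independent sets in the power graph makes every set in which each element has
finitely many neighbours finite. Hence `G` is torsion (the powers `g ^ q`, `q` prime, of an element
of infinite order are pairwise non-adjacent), each layer `{g | orderOf g = d}` is finite (neighbours
of `g` of the same order lie in `⟨g⟩`), and only finitely many primes are orders of elements.

If `G` is infinite, some prime `p` is therefore such that every `p ^ n` is an order, and Kőnig's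
lemma on the finite layers of order `p ^ n` gives a chain `x n` of order `p ^ n` with
`x (n + 1) ^ p = x n`; the union of the `⟨x n⟩` is a copy of `C_{p^∞}`. It is the whole `p`-primary
component, since for `t` of order `p` outside it the elements `t * x n` would be pairwise
non-adjacent. The elements of order prime to `p` form a finite subgroup: otherwise a second prime
`q` would have all `q ^ n` as orders, and elements of orders `p ^ i * q ^ (N - i)`, `i ≤ N`, would
form an independent set of size `N + 1`. A torsion abelian group is the direct product of these two
subgroups.
-/

open Subgroup Finset

def IndepBoundedBy {V : Type*} (Γ : SimpleGraph V) (N : ℕ) : Prop :=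
  ∀ s : Finset V, IsIndepSet Γ ↑s → s.card ≤ N

namespace IndepBoundedBy

variable {V : Type*} {Γ : SimpleGraph V} {N : ℕ}

theorem finite_of_forall_finite_adj (hN : IndepBoundedBy Γ N) {S : Set V}
    (hS : ∀ x ∈ S, {y ∈ S | Γ.Adj x y}.Finite) : S.Finite := by
  classical
  by_contra hinf
  have greedy : ∀ k, ∃ s : Finset V, ↑s ⊆ S ∧ s.card = k ∧ IsIndepSet Γ ↑s := by
    intro k
    induction k with
    | zero => exact ⟨∅, by simp, rfl, by simp [IsIndepSet]⟩
    | succ k ih =>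
      obtain ⟨s, hsS, rfl, hs⟩ := ih
      have hforb : (↑s ∪ ⋃ x ∈ s, {y ∈ S | Γ.Adj x y}).Finite :=
        s.finite_toSet.union (s.finite_toSet.biUnion fun x hx => hS x (hsS hx))
      obtain ⟨a, haS, ha⟩ := (Set.Infinite.sdiff hinf hforb).nonempty
      simp only [Set.mem_union, Finset.mem_coe, Set.mem_iUnion, Set.mem_ofPred_eq, not_or,
        not_exists, not_and] at ha
      refine ⟨insert a s, ?_, card_insert_of_notMem ha.1, ?_⟩
      · simpa [Set.insert_subset_iff] using ⟨haS, hsS⟩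
      · rw [coe_insert, IsIndepSet, Set.pairwise_insert]
        exact ⟨hs, fun b hb _ => ⟨fun hab => ha.2 b hb haS hab.symm, ha.2 b hb haS⟩⟩
  obtain ⟨s, -, hcard, hs⟩ := greedy (N + 1)
  have := hN s hs
  omega

end IndepBoundedBy

namespace powerGraph

variable {G : Type*} [Group G] {g h : G}

theorem orderOf_dvd_or_dvd_of_adj (hadj : (powerGraph G).Adj g h) :
    orderOf h ∣ orderOf g ∨ orderOf g ∣ orderOf h := by
  obtain ⟨-, n, rfl | rfl⟩ := hadj
  · exact Or.inl (orderOf_pow_dvd n)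
  · exact Or.inr (orderOf_pow_dvd n)

/-- If `g = h ^ n` then `zpowers g ≤ zpowers h`, and equal orders make these finite subgroups
equal. -/
theorem mem_zpowers_of_adj_of_orderOf_eq (hg : orderOf g ≠ 0) (hgh : orderOf g = orderOf h)
    (hadj : (powerGraph G).Adj g h) : h ∈ zpowers g := by
  obtain ⟨-, n, rfl | rfl⟩ := hadj
  · exact npow_mem_zpowers g n
  · have : Finite (zpowers h) :=
      (IsOfFinOrder.finite_zpowers (orderOf_pos_iff.mp (hgh ▸ Nat.pos_of_ne_zero hg))).to_subtype
    have hle : zpowers (h ^ n) ≤ zpowers h := zpowers_le.mpr (npow_mem_zpowers h n)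
    rw [Subgroup.eq_of_le_of_card_ge hle (by rw [Nat.card_zpowers, Nat.card_zpowers, hgh])]
    exact mem_zpowers h

end powerGraph

namespace IndepBoundedBy

variable {G : Type*} [Group G] {N : ℕ}

theorem card_le_of_pow_eq_imp_eq (hN : IndepBoundedBy (powerGraph G) N) {ι : Type*}
    (s : Finset ι) (f : ι → G) (hf : ∀ i ∈ s, ∀ j ∈ s, ∀ k : ℕ, f j = f i ^ k → i = j) :
    s.card ≤ N := by
  classical
  have hinj : Set.InjOn f s := fun i hi j hj hij => hf i hi j hj 1 (by rw [pow_one, hij])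
  rw [← card_image_of_injOn hinj]
  refine hN _ ?_
  simp only [coe_image]
  rintro _ ⟨i, hi, rfl⟩ _ ⟨j, hj, rfl⟩ hne ⟨-, k, hk | hk⟩
  · exact hne (congrArg f (hf i hi j hj k hk))
  · exact hne (congrArg f (hf j hj i hi k hk)).symm

theorem of_injective_hom {H : Type*} [Group H] (hN : IndepBoundedBy (powerGraph G) N)
    (f : H →* G) (hf : Function.Injective f) : IndepBoundedBy (powerGraph H) N := by
  classical
  intro s hs
  rw [← card_map ⟨f, hf⟩]
  refine hN _ ?_
  simp only [coe_map, Function.Embedding.coeFn_mk]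
  rintro _ ⟨a, ha, rfl⟩ _ ⟨b, hb, rfl⟩ hne ⟨-, n, hn⟩
  refine hs ha hb (fun hab => hne (congrArg f hab)) ⟨fun hab => hne (congrArg f hab), n, ?_⟩
  simpa only [← map_pow, hf.eq_iff] using hn

theorem isOfFinOrder (hN : IndepBoundedBy (powerGraph G) N) (g : G) : IsOfFinOrder g := by
  by_contra hg
  have hinj := injective_pow_iff_not_isOfFinOrder.mpr hg
  have := hN.card_le_of_pow_eq_imp_eq (range (N + 1)) (fun i => g ^ Nat.nth Nat.Prime i)
    fun i _ j _ k hk => by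
      rw [← pow_mul] at hk
      refine Nat.nth_injective Nat.infinite_setOfPred_prime ?_
      exact (Nat.prime_dvd_prime_iff_eq (Nat.prime_nth_prime i) (Nat.prime_nth_prime j)).mp
        ⟨k, hinj hk⟩
  simp at this

theorem finite_of_adj_imp_orderOf_eq (hN : IndepBoundedBy (powerGraph G) N) {S : Set G}
    (hS : ∀ g ∈ S, ∀ h ∈ S, (powerGraph G).Adj g h → orderOf g = orderOf h) : S.Finite :=
  hN.finite_of_forall_finite_adj fun g hg => (hN.isOfFinOrder g).finite_zpowers.subset
    fun h ⟨hh, hadj⟩ => powerGraph.mem_zpowers_of_adj_of_orderOf_eq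
      (hN.isOfFinOrder g).orderOf_pos.ne' (hS g hg h hh hadj) hadj

theorem finite_setOf_orderOf_eq (hN : IndepBoundedBy (powerGraph G) N) (d : ℕ) :
    {g : G | orderOf g = d}.Finite :=
  hN.finite_of_adj_imp_orderOf_eq fun _ hg _ hh _ => hg.trans hh.symm

theorem finite_setOf_orderOf_prime (hN : IndepBoundedBy (powerGraph G) N) :
    {g : G | (orderOf g).Prime}.Finite :=
  hN.finite_of_adj_imp_orderOf_eq fun g hg h hh hadj => by
    rcases powerGraph.orderOf_dvd_or_dvd_of_adj hadj with hd | hd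
    · exact ((Nat.prime_dvd_prime_iff_eq hh hg).mp hd).symm
    · exact (Nat.prime_dvd_prime_iff_eq hg hh).mp hd

/-- Otherwise each prime `q` has a bound `b q` with `q ^ b q` not an order, and only finitely many
primes are orders, so all orders divide a fixed `D`; the finitely many order layers of divisors of
`D` then exhaust `G`. -/
theorem exists_prime_forall_orderOf_eq_pow [Infinite G] (hN : IndepBoundedBy (powerGraph G) N) :
    ∃ p : ℕ, p.Prime ∧ ∀ n : ℕ, ∃ g : G, orderOf g = p ^ n := by
  by_contra! hcon
  choose! b hb using hcon
  have horder : ∀ (g : G) (m : ℕ), m ∣ orderOf g → ∃ h : G, orderOf h = m := fun g m hm =>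
    ⟨_, orderOf_pow_orderOf_div (hN.isOfFinOrder g).orderOf_pos.ne' hm⟩
  set S := (hN.finite_setOf_orderOf_prime).toFinset
  set D := ∏ h ∈ S, orderOf h ^ b (orderOf h)
  have hD : D ≠ 0 := prod_ne_zero_iff.mpr fun h hh =>
    pow_ne_zero _ (Set.Finite.mem_toFinset _ |>.mp hh).ne_zero
  have hdvd : ∀ g : G, orderOf g ∣ D := by
    intro g
    rw [Nat.dvd_iff_prime_pow_dvd_dvd]
    intro q k hq hqk
    rcases Nat.eq_zero_or_pos k with rfl | hk
    · simp
    obtain ⟨h, hh⟩ := horder g q ((dvd_pow_self q hk.ne').trans hqk)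
    have hkb : k < b q := by
      by_contra! hbk
      obtain ⟨h', hh'⟩ := horder g _ ((pow_dvd_pow q hbk).trans hqk)
      exact hb q hq h' hh'
    calc q ^ k ∣ orderOf h ^ b (orderOf h) := hh ▸ pow_dvd_pow q hkb.le
      _ ∣ D := dvd_prod_of_mem _ (by simpa [S, hh] using hq)
  have hfin : {g : G | orderOf g ∣ D}.Finite :=
    (D.divisors.finite_toSet.biUnion fun d _ => hN.finite_setOf_orderOf_eq d).subset
      fun g hg => Set.mem_biUnion (Nat.mem_divisors.mpr ⟨hg, hD⟩) rfl
  exact Set.infinite_univ (hfin.subset fun g _ => hdvd g)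

end IndepBoundedBy

theorem Nat.le_of_pow_dvd_pow_mul_pow {p q a c d : ℕ} (hp : 1 < p) (hpq : p.Coprime q)
    (h : p ^ a ∣ p ^ c * q ^ d) : a ≤ c :=
  (Nat.pow_dvd_pow_iff_le_right hp).mp ((hpq.pow _ _).dvd_of_dvd_mul_right h)

namespace IndepBoundedBy

variable {G : Type*} [CommGroup G] {N : ℕ}

theorem eq_of_forall_orderOf_eq_pow (hN : IndepBoundedBy (powerGraph G) N) {p q : ℕ}
    (hp : p.Prime) (hq : q.Prime) (hallp : ∀ n : ℕ, ∃ g : G, orderOf g = p ^ n)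
    (hallq : ∀ n : ℕ, ∃ g : G, orderOf g = q ^ n) : p = q := by
  by_contra hpq
  have hcop : p.Coprime q := (Nat.coprime_primes hp hq).mpr hpq
  choose u hu using hallp
  choose v hv using hallq
  have hz : ∀ i, orderOf (u i * v (N - i)) = p ^ i * q ^ (N - i) := fun i => by
    rw [(Commute.all _ _).orderOf_mul_eq_mul_orderOf_of_coprime
      (by rw [hu, hv]; exact hcop.pow _ _), hu, hv]
  have := hN.card_le_of_pow_eq_imp_eq (range (N + 1)) (fun i => u i * v (N - i))
    fun i hi j hj k hk => by
      have hdvd : p ^ j * q ^ (N - j) ∣ p ^ i * q ^ (N - i) := by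
        rw [← hz, ← hz, hk]
        exact orderOf_pow_dvd k
      have hji := Nat.le_of_pow_dvd_pow_mul_pow hp.one_lt hcop (dvd_of_mul_right_dvd hdvd)
      have hij : N - j ≤ N - i := Nat.le_of_pow_dvd_pow_mul_pow hq.one_lt hcop.symm
        (by rw [mul_comm]; exact dvd_of_mul_left_dvd hdvd)
      simp only [mem_range] at hi hj
      omega
  simp at this

end IndepBoundedBy

structure IsPowChain {G : Type*} [Monoid G] (p : ℕ) (x : ℕ → G) : Prop where
  orderOf_eq : ∀ n, orderOf (x n) = p ^ n
  pow_succ_eq : ∀ n, x (n + 1) ^ p = x n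

open CategoryTheory in
theorem IndepBoundedBy.exists_isPowChain {G : Type*} [Group G] {N p : ℕ}
    (hN : IndepBoundedBy (powerGraph G) N) (hp : p ≠ 0)
    (hall : ∀ n : ℕ, ∃ g : G, orderOf g = p ^ n) : ∃ x : ℕ → G, IsPowChain p x := by
  have horder : ∀ n, ∀ g : G, orderOf g = p ^ (n + 1) → orderOf (g ^ p) = p ^ n := by
    intro n g hg
    rw [orderOf_pow_of_dvd hp (hg ▸ dvd_pow_self p n.succ_ne_zero), hg, pow_succ,
      Nat.mul_div_cancel _ (Nat.pos_of_ne_zero hp)]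
  let F : ℕᵒᵖ ⥤ Type _ := Functor.ofOpSequence (X := fun n => {g : G // orderOf g = p ^ n})
    fun n => TypeCat.ofHom fun g => ⟨g.1 ^ p, horder n g.1 g.2⟩
  have : ∀ j, Finite (F.obj j) := fun j => (hN.finite_setOf_orderOf_eq _).to_subtype
  have : ∀ j, Nonempty (F.obj j) := fun j =>
    let ⟨g, hg⟩ := hall j.unop
    ⟨⟨g, hg⟩⟩
  obtain ⟨u, hu⟩ := nonempty_sections_of_finite_inverse_system F
  refine ⟨fun n => (u (Opposite.op n)).1, fun n => (u (Opposite.op n)).2, fun n => ?_⟩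
  have := hu (homOfLE (Nat.le_add_right n 1)).op
  rw [Functor.ofOpSequence_map_homOfLE_succ] at this
  exact congrArg Subtype.val this

section iSupZPowers

variable {G H : Type*} [Group G] [Group H] {x : ℕ → G}

theorem IsPowChain.monotone_zpowers {p : ℕ} (hx : IsPowChain p x) :
    Monotone fun n => zpowers (x n) :=
  monotone_nat_of_le_succ fun n => zpowers_le.mpr ⟨p, by simp [hx.pow_succ_eq]⟩

theorem IsPowChain.prodMk {p : ℕ} {y : ℕ → H} (hx : IsPowChain p x) (hy : IsPowChain p y) :
    IsPowChain p fun n => (x n, y n) :=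
  ⟨fun n => by rw [Prod.orderOf, hx.orderOf_eq, hy.orderOf_eq, Nat.lcm_self],
    fun n => by rw [Prod.pow_mk, hx.pow_succ_eq, hy.pow_succ_eq]⟩

theorem mem_iSup_zpowers_iff (hx : Monotone fun n => zpowers (x n)) {g : G} :
    g ∈ ⨆ n, zpowers (x n) ↔ ∃ n, ∃ k : ℤ, x n ^ k = g := by
  simp only [mem_iSup_of_directed hx.directed_le, mem_zpowers_iff]

theorem injective_domRestrict_iSup_zpowers (hx : Monotone fun n => zpowers (x n)) (f : G →* H)
    (hf : ∀ n, orderOf (f (x n)) = orderOf (x n)) :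
    Function.Injective (f.domRestrict (⨆ n, zpowers (x n))) := by
  rw [injective_iff_map_eq_one]
  rintro ⟨g, hg⟩ hfg
  obtain ⟨n, k, rfl⟩ := (mem_iSup_zpowers_iff hx).mp hg
  have hk : f (x n) ^ k = 1 := by simpa using hfg
  rw [← orderOf_dvd_iff_zpow_eq_one, hf, orderOf_dvd_iff_zpow_eq_one] at hk
  exact Subtype.ext hk

noncomputable def iSupZPowersMulEquiv (hx : Monotone fun n => zpowers (x n)) (f : G →* H)
    (hf : ∀ n, orderOf (f (x n)) = orderOf (x n)) :
    ↥(⨆ n, zpowers (x n)) ≃* ↥(⨆ n, zpowers (f (x n))) :=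
  (MonoidHom.ofInjective (injective_domRestrict_iSup_zpowers hx f hf)).trans
    (MulEquiv.subgroupCongr
      (by simp [MonoidHom.domRestrict_range, Subgroup.map_iSup, MonoidHom.map_zpowers]))

/-- Both subgroups are the image of the subgroup generated by the chain `n ↦ (x n, y n)` of
`G × H` under the projections, which are injective on it. -/
noncomputable def IsPowChain.mulEquiv {p : ℕ} {y : ℕ → H} (hx : IsPowChain p x)
    (hy : IsPowChain p y) : ↥(⨆ n, zpowers (x n)) ≃* ↥(⨆ n, zpowers (y n)) :=
  have hxy := hx.prodMk hy
  (iSupZPowersMulEquiv hxy.monotone_zpowers (MonoidHom.fst G H)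
      fun n => by rw [hxy.orderOf_eq, MonoidHom.coe_fst, hx.orderOf_eq]).symm.trans
    (iSupZPowersMulEquiv hxy.monotone_zpowers (MonoidHom.snd G H)
      fun n => by rw [hxy.orderOf_eq, MonoidHom.coe_snd, hy.orderOf_eq])

end iSupZPowers

section Prufer

variable {p : ℕ}

theorem inv_pow_mem_pruferGroup (p n : ℕ) :
    ((((p : ℚ) ^ n)⁻¹ : ℚ) : ℚ ⧸ AddSubgroup.zmultiples (1 : ℚ)) ∈ pruferGroup p := by
  refine ⟨n, ?_⟩
  rw [← QuotientAddGroup.mk_nsmul, nsmul_eq_mul, Nat.cast_pow]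
  rcases eq_or_ne ((p : ℚ) ^ n) 0 with h | h
  · simp [h]
  · rw [mul_inv_cancel₀ h]
    exact (QuotientAddGroup.eq_zero_iff _).mpr (AddSubgroup.mem_zmultiples 1)

def pruferChain (p : ℕ) (n : ℕ) : Multiplicative (pruferGroup p) :=
  .ofAdd ⟨(((p : ℚ) ^ n)⁻¹ : ℚ), inv_pow_mem_pruferGroup p n⟩

theorem isPowChain_pruferChain (hp : p ≠ 0) : IsPowChain p (pruferChain p) := by
  have hp' : (p : ℚ) ≠ 0 := Nat.cast_ne_zero.mpr hp
  constructor
  · intro n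
    have : Fact ((0 : ℚ) < 1) := ⟨one_pos⟩
    rw [pruferChain, orderOf_ofAdd_eq_addOrderOf, AddSubgroup.addOrderOf_mk, ← one_div,
      ← Nat.cast_pow]
    exact AddCircle.addOrderOf_period_div (pow_pos (Nat.pos_of_ne_zero hp) n)
  · intro n
    apply Multiplicative.toAdd.injective
    apply Subtype.ext
    rw [toAdd_pow, AddSubgroup.coe_nsmul, pruferChain, pruferChain, toAdd_ofAdd, toAdd_ofAdd,
      ← QuotientAddGroup.mk_nsmul, nsmul_eq_mul, pow_succ]
    congr 1
    field_simp

theorem iSup_zpowers_pruferChain (hp : p ≠ 0) : ⨆ n, zpowers (pruferChain p n) = ⊤ := by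
  refine eq_top_iff.mpr fun X _ => ?_
  obtain ⟨n, hn⟩ := X.toAdd.2
  obtain ⟨r, hr⟩ := QuotientAddGroup.mk_surjective (X.toAdd : ℚ ⧸ AddSubgroup.zmultiples (1 : ℚ))
  rw [← hr, ← QuotientAddGroup.mk_nsmul, QuotientAddGroup.eq_zero_iff,
    AddSubgroup.mem_zmultiples_iff] at hn
  obtain ⟨z, hz⟩ := hn
  refine (mem_iSup_zpowers_iff (isPowChain_pruferChain hp).monotone_zpowers).mpr ⟨n, z, ?_⟩
  apply Multiplicative.toAdd.injective
  apply Subtype.ext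
  rw [toAdd_zpow, AddSubgroup.coe_zsmul, pruferChain, toAdd_ofAdd, ← hr,
    ← QuotientAddGroup.mk_zsmul]
  congr 1
  rw [zsmul_eq_mul, mul_one, nsmul_eq_mul] at hz
  rw [zsmul_eq_mul, hz, Nat.cast_pow]
  have : (p : ℚ) ≠ 0 := Nat.cast_ne_zero.mpr hp
  field_simp

noncomputable def pruferMulEquiv (hp : p ≠ 0) :
    Multiplicative (pruferGroup p) ≃* ↥(⨆ n, zpowers (pruferChain p n)) :=
  topEquiv.symm.trans (MulEquiv.subgroupCongr (iSup_zpowers_pruferChain hp).symm)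

end Prufer

namespace IsPowChain

variable {G : Type*} [CommGroup G] {N p : ℕ} {x : ℕ → G}

/-- Otherwise `t` has order `p` modulo `P`, so `t * x a = (t * x b) ^ k` forces `k ≡ 1 [MOD p]`,
hence `x a = x b ^ k` with `k` prime to `p`, and `a = b`. -/
theorem mem_iSup_zpowers_of_orderOf_eq (hN : IndepBoundedBy (powerGraph G) N) (hp : p.Prime)
    (hx : IsPowChain p x) {t : G} (ht : orderOf t = p) : t ∈ ⨆ n, zpowers (x n) := by
  have : Fact p.Prime := ⟨hp⟩
  set P := ⨆ n, zpowers (x n)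
  by_contra htP
  have hxP : ∀ n, (x n : G ⧸ P) = 1 := fun n =>
    (QuotientGroup.eq_one_iff _).mpr (mem_iSup_of_mem n (mem_zpowers _))
  have htbar : orderOf (t : G ⧸ P) = p := orderOf_eq_prime
    (by rw [← QuotientGroup.mk_pow, ← ht, pow_orderOf_eq_one, QuotientGroup.mk_one])
    (mt (QuotientGroup.eq_one_iff t).mp htP)
  have key : ∀ a b k : ℕ, t * x a = (t * x b) ^ k → a = b := by
    intro a b k h
    have hk : k ≡ 1 [MOD p] := by
      have := congrArg (QuotientGroup.mk (s := P)) h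
      rw [QuotientGroup.mk_pow, QuotientGroup.mk_mul, QuotientGroup.mk_mul, hxP, hxP,
        mul_one] at this
      rw [← htbar, ← pow_eq_pow_iff_modEq, pow_one]
      exact this.symm
    have hxa : x a = x b ^ k := by
      rw [mul_pow, ← pow_one t, ← pow_mul, one_mul,
        (pow_eq_pow_iff_modEq.mpr (ht ▸ hk) : t ^ k = t ^ 1)] at h
      exact mul_left_cancel h
    have hcop : (orderOf (x b)).Coprime k := by
      rw [hx.orderOf_eq]
      exact Nat.Coprime.pow_left _ (Nat.coprime_comm.mp (hk.gcd_eq.trans (Nat.gcd_one_left p)))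
    apply Nat.pow_right_injective hp.two_le
    simp only [← hx.orderOf_eq, hxa, hcop.orderOf_pow]
  have := hN.card_le_of_pow_eq_imp_eq (range (N + 1)) (fun a => t * x a)
    fun a _ b _ k h => (key b a k h).symm
  simp at this

/-- Every element of `P` is a `p`-th power in `P`, so `g ^ p ∈ P` gives `y ∈ P` with
`(g * y⁻¹) ^ p = 1`. -/
theorem mem_iSup_zpowers_of_pow_mem (hN : IndepBoundedBy (powerGraph G) N) (hp : p.Prime)
    (hx : IsPowChain p x) {g : G} (hg : g ^ p ∈ ⨆ n, zpowers (x n)) :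
    g ∈ ⨆ n, zpowers (x n) := by
  have : Fact p.Prime := ⟨hp⟩
  obtain ⟨m, k, hmk⟩ := (mem_iSup_zpowers_iff hx.monotone_zpowers).mp hg
  have hyP : x (m + 1) ^ k ∈ ⨆ n, zpowers (x n) := mem_iSup_of_mem (m + 1) (zpow_mem_zpowers _ k)
  have hyp : (x (m + 1) ^ k) ^ p = g ^ p := by
    rw [← hmk, ← zpow_natCast, ← zpow_mul, mul_comm, zpow_mul, zpow_natCast, hx.pow_succ_eq]
  have hty : (g * (x (m + 1) ^ k)⁻¹) ^ p = 1 := by rw [mul_pow, inv_pow, hyp, mul_inv_cancel]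
  have htP : g * (x (m + 1) ^ k)⁻¹ ∈ ⨆ n, zpowers (x n) := by
    by_cases h1 : g * (x (m + 1) ^ k)⁻¹ = 1
    · rw [h1]
      exact one_mem _
    · exact hx.mem_iSup_zpowers_of_orderOf_eq hN hp (orderOf_eq_prime hty h1)
  simpa using mul_mem htP hyP

theorem iSup_zpowers_eq_primaryComponent (hN : IndepBoundedBy (powerGraph G) N) (hp : p.Prime)
    (hx : IsPowChain p x) : ⨆ n, zpowers (x n) = CommGroup.primaryComponent G p := by
  ext g
  rw [CommGroup.mem_primaryComponent]
  constructor
  · rw [mem_iSup_zpowers_iff hx.monotone_zpowers]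
    rintro ⟨n, k, rfl⟩
    refine ⟨n, ?_⟩
    rw [← zpow_natCast, ← zpow_mul, mul_comm, zpow_mul, zpow_natCast, ← hx.orderOf_eq,
      pow_orderOf_eq_one, one_zpow]
  · rintro ⟨k, hk⟩
    induction k generalizing g with
    | zero => simp_all
    | succ k ih =>
      exact hx.mem_iSup_zpowers_of_pow_mem hN hp (ih (g ^ p) (by rwa [← pow_mul, ← pow_succ']))

end IsPowChain

section CoprimeComponent

variable (G : Type*) [CommGroup G] (p : ℕ)

def coprimeComponent : Subgroup G where
  carrier := {g | (orderOf g).Coprime p}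
  one_mem' := by simp
  mul_mem' {a b} ha hb :=
    Nat.Coprime.coprime_dvd_left (Commute.all a b).orderOf_mul_dvd_mul_orderOf (ha.mul_left hb)
  inv_mem' {a} ha := by simpa using ha

variable {G p}

theorem mem_coprimeComponent {g : G} : g ∈ coprimeComponent G p ↔ (orderOf g).Coprime p :=
  Iff.rfl

theorem disjoint_primaryComponent_coprimeComponent :
    Disjoint (CommGroup.primaryComponent G p) (coprimeComponent G p) := by
  rw [disjoint_def]
  rintro g ⟨k, hk⟩ hg
  exact orderOf_eq_one_iff.mp
    ((mem_coprimeComponent.mp hg).pow_right k |>.eq_one_of_dvd (orderOf_dvd_of_pow_eq_one hk))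

/-- Bézout: writing `orderOf g = p ^ a * c` with `c` prime to `p` and `1 = p ^ a * u + c * v`,
`g = g ^ (c * v) * g ^ (p ^ a * u)`. -/
theorem exists_mul_eq_of_isOfFinOrder (hp : p.Prime) {g : G} (hg : IsOfFinOrder g) :
    ∃ a ∈ CommGroup.primaryComponent G p, ∃ b ∈ coprimeComponent G p, a * b = g := by
  set n := orderOf g
  set q := p ^ n.factorization p
  set c := n / q
  have hn : q * c = n := Nat.ordProj_mul_ordCompl_eq_self n p
  have hc : c.Coprime p := (Nat.coprime_ordCompl hp hg.orderOf_pos.ne').symm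
  obtain ⟨u, v, huv⟩ := Nat.isCoprime_iff_coprime.mpr (hc.symm.pow_left (n.factorization p))
  have hgn : ∀ w : ℤ, g ^ (w * n) = 1 := fun w => by
    rw [mul_comm, zpow_mul, zpow_natCast, pow_orderOf_eq_one, one_zpow]
  refine ⟨g ^ (v * c), ⟨n.factorization p, ?_⟩, g ^ (u * q), ?_, ?_⟩
  · rw [← zpow_natCast, ← zpow_mul, mul_assoc, ← Nat.cast_mul, mul_comm c, hn]
    exact hgn v
  · refine Nat.Coprime.coprime_dvd_left (orderOf_dvd_of_pow_eq_one ?_) hc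
    rw [← zpow_natCast, ← zpow_mul, mul_assoc, ← Nat.cast_mul, hn]
    exact hgn u
  · rw [← zpow_add, add_comm, huv, zpow_one]

noncomputable def primaryComponentProdMulEquiv (hG : IsMulTorsion G) (hp : p.Prime) :
    CommGroup.primaryComponent G p × coprimeComponent G p ≃* G :=
  MulEquiv.ofBijective ((CommGroup.primaryComponent G p).subtype.coprod
      (coprimeComponent G p).subtype)
    (isComplement'_of_disjoint_and_mul_eq_univ disjoint_primaryComponent_coprimeComponent
      (Set.eq_univ_of_forall fun g => by
        simpa [Set.mem_mul] using exists_mul_eq_of_isOfFinOrder hp (hG g)))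

theorem not_dvd_card_coprimeComponent [Finite (coprimeComponent G p)] (hp : p.Prime) :
    ¬ p ∣ Nat.card (coprimeComponent G p) := by
  have : Fact p.Prime := ⟨hp⟩
  intro hdvd
  obtain ⟨g, hg⟩ := exists_prime_orderOf_dvd_card' p hdvd
  have := mem_coprimeComponent.mp g.2
  rw [orderOf_coe, hg, Nat.coprime_self] at this
  exact hp.ne_one this

theorem IndepBoundedBy.finite_coprimeComponent {N : ℕ} (hN : IndepBoundedBy (powerGraph G) N)
    (hp : p.Prime) (hall : ∀ n : ℕ, ∃ g : G, orderOf g = p ^ n) :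
    Finite (coprimeComponent G p) := by
  by_contra hinf
  have : Infinite (coprimeComponent G p) := not_finite_iff_infinite.mp hinf
  obtain ⟨q, hq, hallq⟩ := (hN.of_injective_hom _ (coprimeComponent G p).subtype_injective)
    |>.exists_prime_forall_orderOf_eq_pow
  have hqp : q = p := hN.eq_of_forall_orderOf_eq_pow hq hp
    (fun n => let ⟨g, hg⟩ := hallq n; ⟨g, by rw [orderOf_coe, hg]⟩) hall
  obtain ⟨g, hg⟩ := hallq 1
  have := mem_coprimeComponent.mp g.2
  rw [orderOf_coe, hg, pow_one, hqp, Nat.coprime_self] at this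
  exact hp.ne_one this

end CoprimeComponent

noncomputable def IsPowChain.primaryComponentMulEquivPrufer {G : Type*} [CommGroup G] {N p : ℕ}
    {x : ℕ → G} (hN : IndepBoundedBy (powerGraph G) N) (hp : p.Prime) (hx : IsPowChain p x) :
    CommGroup.primaryComponent G p ≃* Multiplicative (pruferGroup p) :=
  (MulEquiv.subgroupCongr (hx.iSup_zpowers_eq_primaryComponent hN hp)).symm.trans
    ((hx.mulEquiv (isPowChain_pruferChain hp.ne_zero)).trans (pruferMulEquiv hp.ne_zero).symm)

theorem abelian_finite_independence_number (G : Type*) [CommGroup G]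
    (h : ∃ N : ℕ, ∀ s : Finset G, IsIndepSet (powerGraph G) ↑s → s.card ≤ N) :
    Finite G ∨
      ∃ (p : ℕ) (_ : p.Prime) (H : Type) (_ : Group H) (_ : Finite H),
        ¬ p ∣ Nat.card H ∧
          Nonempty (G ≃* Multiplicative (pruferGroup p) × H) := by
  obtain ⟨N, hN⟩ := h
  rcases finite_or_infinite G with hG | hG
  · exact Or.inl hG
  obtain ⟨p, hp, hall⟩ := IndepBoundedBy.exists_prime_forall_orderOf_eq_pow hN
  obtain ⟨x, hx⟩ := IndepBoundedBy.exists_isPowChain hN hp.ne_zero hall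
  have : Finite (coprimeComponent G p) := IndepBoundedBy.finite_coprimeComponent hN hp hall
  refine Or.inr ⟨p, hp, Shrink.{0} (coprimeComponent G p), inferInstance, inferInstance, ?_, ⟨?_⟩⟩
  · rw [Nat.card_congr (equivShrink _).symm]
    exact not_dvd_card_coprimeComponent hp
  · exact (primaryComponentProdMulEquiv (IndepBoundedBy.isOfFinOrder hN) hp).symm.trans
      (MulEquiv.prodCongr (hx.primaryComponentMulEquivPrufer hN hp) Shrink.mulEquiv.symm)
end

section
/- If the clique number of the power graph of a group G is finite, then G has bounded exponent, i.e., there exists n ≥ 1 with g^n = e for all g in G. -/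
/-!
Bounded cliques force every element `g` to have finite order (else `g, g², g⁴, …` is an infinite
clique), every prime `p ∣ orderOf g` to satisfy `p ≤ N + 1` (the `p - 1` generators of a subgroup
of order `p` are powers of each other), and every `p`-adic valuation of `orderOf g` to be `< N`
(if `p ^ a ∣ orderOf g`, then `g, g ^ p, …, g ^ p ^ a` is a clique). Hence all orders divide
`(N + 1)! ^ N`.
-/

open Nat

theorem Nat.dvd_factorial_pow_of_forall_prime {m B K : ℕ} (hm : m ≠ 0)
    (hle : ∀ p, p.Prime → p ∣ m → p ≤ B) (hval : ∀ p, p.Prime → m.factorization p ≤ K) :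
    m ∣ B ! ^ K := by
  rw [← Nat.factorization_le_iff_dvd hm (by positivity)]
  intro p
  by_cases hpm : p.Prime ∧ p ∣ m
  · obtain ⟨hp, hpm⟩ := hpm
    have hpB : 1 ≤ (B !).factorization p :=
      hp.factorization_pos_of_dvd (factorial_ne_zero B) (dvd_factorial hp.pos (hle p hp hpm))
    calc m.factorization p ≤ K := hval p hp
      _ ≤ K * (B !).factorization p := Nat.le_mul_of_pos_right K hpB
      _ = (B ! ^ K).factorization p := by simp [Nat.factorization_pow]
  · rw [(Nat.factorization_eq_zero_iff m p).mpr (by tauto)]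
    exact Nat.zero_le _

section PowerGraph

variable {G : Type*} [Group G]

lemma exists_pow_eq_pow_of_dvd (x : G) {a b : ℕ} (hab : a ∣ b) : ∃ n : ℕ, x ^ b = (x ^ a) ^ n := by
  obtain ⟨c, rfl⟩ := hab
  exact ⟨c, pow_mul x a c⟩

lemma pow_injOn_dvd_orderOf {x : G} (hx : orderOf x ≠ 0) :
    Set.InjOn (x ^ ·) {d | d ∣ orderOf x} := by
  intro a ha b hb hab
  have hdiv : orderOf x / a = orderOf x / b := by
    rw [← orderOf_pow_of_dvd (ne_zero_of_dvd_ne_zero hx ha) ha,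
      ← orderOf_pow_of_dvd (ne_zero_of_dvd_ne_zero hx hb) hb]
    exact congrArg orderOf hab
  exact (Nat.div_eq_iff_eq_of_dvd_dvd hx ha hb).mp hdiv

lemma card_le_of_pow_chain {N : ℕ}
    (hN : ∀ s : Finset G, (powerGraph G).IsClique ↑s → s.card ≤ N) {t : ℕ} (f : Fin t → G)
    (hf : Function.Injective f) (hpow : ∀ i j, i < j → ∃ n : ℕ, f j = f i ^ n) : t ≤ N := by
  classical
  have hclique : (powerGraph G).IsClique ↑(Finset.univ.image f) := by
    simp only [Finset.coe_image, Finset.coe_univ, Set.image_univ]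
    rintro _ ⟨i, rfl⟩ _ ⟨j, rfl⟩ hne
    refine ⟨hne, ?_⟩
    rcases lt_or_gt_of_ne (ne_of_apply_ne f hne) with hij | hji
    · obtain ⟨n, hn⟩ := hpow i j hij
      exact ⟨n, Or.inl hn⟩
    · obtain ⟨n, hn⟩ := hpow j i hji
      exact ⟨n, Or.inr hn⟩
  simpa [Finset.card_image_of_injective _ hf] using hN _ hclique

lemma isOfFinOrder_of_clique_card_le {N : ℕ}
    (hN : ∀ s : Finset G, (powerGraph G).IsClique ↑s → s.card ≤ N) (g : G) : IsOfFinOrder g := by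
  by_contra hg
  have hinj : Function.Injective fun k : Fin (N + 1) => g ^ 2 ^ (k : ℕ) :=
    (injective_pow_iff_not_isOfFinOrder.mpr hg).comp <|
      (Nat.pow_right_injective le_rfl).comp Fin.val_injective
  have := card_le_of_pow_chain hN _ hinj fun i j hij =>
    exists_pow_eq_pow_of_dvd g (pow_dvd_pow 2 hij.le)
  omega

lemma prime_le_of_dvd_orderOf {N : ℕ}
    (hN : ∀ s : Finset G, (powerGraph G).IsClique ↑s → s.card ≤ N) {g : G} {p : ℕ}
    (hp : p.Prime) (hpg : p ∣ orderOf g) : p ≤ N + 1 := by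
  set h := g ^ (orderOf g / p)
  have hh : orderOf h = p :=
    orderOf_pow_orderOf_div (isOfFinOrder_of_clique_card_le hN g).orderOf_pos.ne' hpg
  have hinj : Function.Injective fun k : Fin (p - 1) => h ^ ((k : ℕ) + 1) := by
    intro i j hij
    have := pow_inj_mod.mp hij
    rw [hh, Nat.mod_eq_of_lt (by omega), Nat.mod_eq_of_lt (by omega)] at this
    exact Fin.ext (by omega)
  have := card_le_of_pow_chain hN _ hinj fun i j _ => by
    have hgen : h ∈ Subgroup.zpowers (h ^ ((i : ℕ) + 1)) := by
      rw [mem_zpowers_pow_iff, hh, ← Nat.coprime_iff_gcd_eq_one]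
      exact (Nat.coprime_of_lt_prime (by omega) (by have := i.isLt; omega) hp).symm
    obtain ⟨n, hn⟩ := ((isOfFinOrder_of_clique_card_le hN _).mem_powers_iff_mem_zpowers).mpr
      (Subgroup.pow_mem _ hgen ((j : ℕ) + 1))
    exact ⟨n, hn.symm⟩
  omega

lemma factorization_orderOf_lt {N : ℕ}
    (hN : ∀ s : Finset G, (powerGraph G).IsClique ↑s → s.card ≤ N) (g : G) {p : ℕ}
    (hp : p.Prime) : (orderOf g).factorization p < N := by
  have hg := (isOfFinOrder_of_clique_card_le hN g).orderOf_pos.ne'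
  set a := (orderOf g).factorization p
  have hdvd (k : Fin (a + 1)) : p ^ (k : ℕ) ∣ orderOf g :=
    (pow_dvd_pow p (Nat.lt_succ_iff.mp k.isLt)).trans (Nat.ordProj_dvd _ _)
  have hinj : Function.Injective fun k : Fin (a + 1) => g ^ p ^ (k : ℕ) := fun i j hij =>
    Fin.ext <| Nat.pow_right_injective hp.two_le <| pow_injOn_dvd_orderOf hg (hdvd i) (hdvd j) hij
  exact card_le_of_pow_chain hN _ hinj fun i j hij =>
    exists_pow_eq_pow_of_dvd g (pow_dvd_pow p hij.le)

end PowerGraph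

theorem bounded_exponent_of_finite_clique_number (G : Type*) [Group G]
    (h : ∃ N : ℕ, ∀ s : Finset G, (powerGraph G).IsClique ↑s → s.card ≤ N) :
    ∃ n : ℕ, 1 ≤ n ∧ ∀ g : G, g ^ n = 1 := by
  obtain ⟨N, hN⟩ := h
  refine ⟨(N + 1)! ^ N, Nat.one_le_iff_ne_zero.mpr (by positivity), fun g => ?_⟩
  rw [← orderOf_dvd_iff_pow_eq_one]
  exact Nat.dvd_factorial_pow_of_forall_prime (isOfFinOrder_of_clique_card_le hN g).orderOf_pos.ne'
    (fun p hp hpg => prime_le_of_dvd_orderOf hN hp hpg)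
    (fun p hp => (factorization_orderOf_lt hN g hp).le)
end

section
/- Every periodic group has power graph with at most countable chromatic number. -/
/-!
Colour `g` by the pair `(orderOf g, i g)`, where `i` numbers the generators of the cyclic
subgroup `⟨g⟩`; there are finitely many since `⟨g⟩` is finite. If `y = x ^ n` and `x`, `y`
have the same order, then `⟨y⟩ ≤ ⟨x⟩` is an inclusion of finite groups of equal size, so `x`
and `y` generate the same subgroup and are told apart by `i`.
-/

open Subgroup

section

variable {G : Type*} [Group G]

theorem zpowers_pow_eq_of_orderOf_eq {x : G} (hx : IsOfFinOrder x) {n : ℕ}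
    (h : orderOf (x ^ n) = orderOf x) : zpowers (x ^ n) = zpowers x := by
  have : Finite (zpowers x) := (finite_zpowers.2 hx).to_subtype
  refine eq_of_le_of_card_ge (zpowers_le_of_mem (npow_mem_zpowers x n)) ?_
  rw [Nat.card_zpowers, Nat.card_zpowers, h]

theorem powerGraph_adj_zpowers_eq_of_orderOf_eq (hG : ∀ g : G, IsOfFinOrder g) {x y : G}
    (hxy : (powerGraph G).Adj x y) (h : orderOf x = orderOf y) :
    zpowers x = zpowers y := by
  obtain ⟨-, n, rfl | rfl⟩ := hxy
  · exact (zpowers_pow_eq_of_orderOf_eq (hG x) h.symm).symm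
  · exact zpowers_pow_eq_of_orderOf_eq (hG y) h

theorem finite_setOf_zpowers_eq (hG : ∀ g : G, IsOfFinOrder g) (H : Subgroup G) :
    {g : G | zpowers g = H}.Finite := by
  obtain hempty | ⟨g, rfl⟩ := Set.eq_empty_or_nonempty {g : G | zpowers g = H}
  · simp [hempty]
  · refine (finite_zpowers.2 (hG g)).subset fun h (hh : zpowers h = zpowers g) => ?_
    exact hh ▸ mem_zpowers h

end

theorem periodic_group_countable_chromatic (G : Type*) [Group G]
    (hG : ∀ g : G, IsOfFinOrder g) :
    ∃ c : G → ℕ, ∀ x y : G, (powerGraph G).Adj x y → c x ≠ c y := by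
  choose i hi using fun H : Subgroup G =>
    Set.countable_iff_exists_injOn.1 (finite_setOf_zpowers_eq hG H).countable
  refine ⟨fun g => Nat.pair (orderOf g) (i (zpowers g) g), fun x y hxy hc => hxy.1 ?_⟩
  obtain ⟨horder, hindex⟩ := Nat.pair_eq_pair.1 hc
  have hzpowers := powerGraph_adj_zpowers_eq_of_orderOf_eq hG hxy horder
  rw [hzpowers] at hindex
  exact hi (zpowers y) hzpowers rfl hindex
end

section
/- If G is a group of finite exponent n, then the power graph of G is a perfect graph. -/
/-- A graph is perfect if every finite induced subgraph has chromatic number equal to its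
clique number. -/
def SimpleGraph.IsPerfect {V : Type*} (G' : SimpleGraph V) : Prop :=
  ∀ s : Finset V,
    (SimpleGraph.induce (↑s : Set V) G').chromaticNumber =
      ((SimpleGraph.induce (↑s : Set V) G').cliqueNum : ℕ∞)

open Order

namespace SimpleGraph

variable {V : Type*} {H : SimpleGraph V}

section PartialOrder

variable [PartialOrder V]

theorem length_lt_cliqueNum [Finite V] (hadj : ∀ ⦃a b : V⦄, a < b → H.Adj a b)
    (p : LTSeries V) : p.length < H.cliqueNum := by
  classical
  have hclique : H.IsClique (Finset.univ.image p : Set V) := by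
    rw [Finset.coe_image, Finset.coe_univ, Set.image_univ]
    rintro _ ⟨i, rfl⟩ _ ⟨j, rfl⟩ hij
    rcases lt_or_gt_of_ne (ne_of_apply_ne p hij) with h | h
    · exact hadj (p.strictMono h)
    · exact (hadj (p.strictMono h)).symm
  have hcard : (Finset.univ.image p).card = p.length + 1 := by
    rw [Finset.card_image_of_injective _ p.strictMono.injective, Finset.card_univ,
      Fintype.card_fin]
  have := hclique.card_le_cliqueNum
  omega

theorem height_lt_cliqueNum [Finite V] (hadj : ∀ ⦃a b : V⦄, a < b → H.Adj a b) (a : V) :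
    height a < H.cliqueNum := by
  have hpos : 0 < H.cliqueNum := length_lt_cliqueNum hadj (RelSeries.singleton _ a)
  calc height a ≤ (H.cliqueNum - 1 : ℕ) :=
        height_le fun p _ ↦ by exact_mod_cast Nat.le_sub_one_of_lt (length_lt_cliqueNum hadj p)
    _ < H.cliqueNum := by exact_mod_cast Nat.sub_one_lt hpos.ne'

theorem colorable_cliqueNum_of_adj_iff [Finite V] (hadj : ∀ a b, H.Adj a b ↔ a < b ∨ b < a) :
    H.Colorable H.cliqueNum := by
  have hlt (a : V) := height_lt_cliqueNum (fun a b h ↦ (hadj a b).2 (.inl h)) a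
  have hcast (a : V) : ((height a).toNat : ℕ∞) = height a :=
    ENat.natCast_toNat_eq_self.2 (hlt a).ne_top
  refine (colorable_iff_exists_bdd_nat_coloring _).2
    ⟨Coloring.mk (fun v ↦ (height v).toNat) fun {a b} hab heq ↦ ?_,
      fun v ↦ ENat.natCast_lt_natCast.1 ((hcast v).trans_lt (hlt v))⟩
  have heq' : height a = height b := by rw [← hcast a, ← hcast b, heq]
  rcases (hadj a b).1 hab with h | h
  · exact (height_strictMono h (hlt a).ne_top.lt_top).ne heq'
  · exact (height_strictMono h (hlt b).ne_top.lt_top).ne heq'.symm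

theorem chromaticNumber_eq_cliqueNum_of_adj_iff [Finite V]
    (hadj : ∀ a b, H.Adj a b ↔ a < b ∨ b < a) : H.chromaticNumber = H.cliqueNum := by
  obtain ⟨s, hs⟩ := H.exists_isNClique_cliqueNum
  refine le_antisymm (colorable_cliqueNum_of_adj_iff hadj).chromaticNumber_le ?_
  simpa [hs.card_eq] using hs.isClique.card_le_chromaticNumber

theorem isPerfect_of_adj_iff (hadj : ∀ a b, H.Adj a b ↔ a < b ∨ b < a) : H.IsPerfect :=
  fun _ ↦ chromaticNumber_eq_cliqueNum_of_adj_iff fun a b ↦ hadj a b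

end PartialOrder

theorem isPerfect_of_adj_iff_le_or_ge {α : Type*} [PartialOrder α] (f : V → α)
    (hadj : ∀ a b, H.Adj a b ↔ a ≠ b ∧ (f a ≤ f b ∨ f b ≤ f a)) : H.IsPerfect := by
  let c : V ↪ Cardinal := embeddingToCardinal
  let : PartialOrder V := PartialOrder.lift (fun v ↦ toLex (f v, c v))
    fun a b h ↦ c.injective (congrArg (fun p ↦ (ofLex p).2) h)
  refine isPerfect_of_adj_iff fun a b ↦ (hadj a b).trans ?_
  change _ ↔ toLex (f a, c a) < toLex (f b, c b) ∨ toLex (f b, c b) < toLex (f a, c a)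
  have hne := c.injective.ne_iff (x := a) (y := b)
  simp only [Prod.Lex.toLex_lt_toLex, le_iff_lt_or_eq]
  grind

end SimpleGraph

theorem IsOfFinOrder.exists_pow_eq_iff_zpowers_le {G : Type*} [Group G] {x : G}
    (hx : IsOfFinOrder x) (y : G) :
    (∃ n : ℕ, y = x ^ n) ↔ Subgroup.zpowers y ≤ Subgroup.zpowers x := by
  rw [Subgroup.zpowers_le, ← hx.mem_powers_iff_mem_zpowers, Submonoid.mem_powers_iff]
  simp only [eq_comm]

open Subgroup in
theorem powerGraph_adj_iff_of_isMulTorsion {G : Type*} [Group G] (hG : IsMulTorsion G)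
    (x y : G) :
    (powerGraph G).Adj x y ↔ x ≠ y ∧ (zpowers x ≤ zpowers y ∨ zpowers y ≤ zpowers x) := by
  change x ≠ y ∧ (∃ n : ℕ, y = x ^ n ∨ x = y ^ n) ↔ _
  rw [exists_or, (hG x).exists_pow_eq_iff_zpowers_le,
    (hG y).exists_pow_eq_iff_zpowers_le, or_comm]

theorem powerGraph_perfect_of_bounded_exponent (G : Type*) [Group G] (n : ℕ)
    (hn : 0 < n) (hexp : Monoid.exponent G = n) :
    (powerGraph G).IsPerfect := by
  have hG : IsMulTorsion G := ExponentExists.isMulTorsion (Monoid.exponent_pos.1 (hexp ▸ hn))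
  exact SimpleGraph.isPerfect_of_adj_iff_le_or_ge Subgroup.zpowers
    (powerGraph_adj_iff_of_isMulTorsion hG)
end
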